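/- arXiv:2103.04836 — 2 statements merged into one kernel-verified Lean document; each statement's English description precedes it below -/
import Mathlib

section
/- Let M be an additive abelian group, w an integer, N a natural number, and a : ℕ → M a function. Then ∑_{j=0}^{N} (-1)^j · ( ∑_{k=0}^{j} ε_{w-j+2k} ) · a(j) = ε_w · ∑_{k : 2k ≤ N} (-1)^k · a(2k), where for a sign ε ∈ {1,-1} and x ∈ M, ε·x means x if ε = 1 and -x if ε = -1. -/
/-!
Write ε_m = (-1)^(m(m+1)/2). Since ε_(m+2) = -ε_m, the inner sum is ε_(w-j) · ∑_{k ≤ j} (-1)^k,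
which vanishes for odd j and equals ε_(w-j) = (-1)^(j/2) ε_w for even j; reindexing the even j as
2k gives the right-hand side.
-/

open Finset

theorem Int.negOnePow_triangular_add_two (m : ℤ) :
    ((m + 2) * (m + 2 + 1) / 2).negOnePow = -(m * (m + 1) / 2).negOnePow := by
  have h : (m + 2) * (m + 2 + 1) / 2 = m * (m + 1) / 2 + (2 * m + 3) := by
    rw [show (m + 2) * (m + 2 + 1) = m * (m + 1) + (2 * m + 3) * 2 by ring,
      Int.add_mul_ediv_right _ _ two_ne_zero]
  rw [h, Int.negOnePow_add, Int.negOnePow_odd (2 * m + 3) ⟨m + 1, by ring⟩, mul_neg_one]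

theorem Int.negOnePow_triangular_add_two_mul (m : ℤ) (k : ℕ) :
    ((m + 2 * k) * (m + 2 * k + 1) / 2).negOnePow = (-1) ^ k * (m * (m + 1) / 2).negOnePow := by
  induction k with
  | zero => simp
  | succ k ih =>
    rw [show m + 2 * ↑(k + 1) = m + 2 * k + 2 by push_cast; ring,
      Int.negOnePow_triangular_add_two, ih, pow_succ, mul_neg_one, neg_mul]

theorem Int.negOnePow_triangular_sub_two_mul (m : ℤ) (k : ℕ) :
    ((m - 2 * k) * (m - 2 * k + 1) / 2).negOnePow = (-1) ^ k * (m * (m + 1) / 2).negOnePow := by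
  have h := Int.negOnePow_triangular_add_two_mul (m - 2 * k) k
  rw [sub_add_cancel] at h
  rw [h, ← mul_assoc, ← pow_add, ← two_mul, pow_mul, neg_one_sq, one_pow, one_mul]

theorem Int.sum_range_succ_negOnePow_triangular_add_two_mul (m : ℤ) (j : ℕ) :
    ∑ k ∈ Finset.range (j + 1), (((m + 2 * k) * (m + 2 * k + 1) / 2).negOnePow : ℤ)
      = if Even j then ((m * (m + 1) / 2).negOnePow : ℤ) else 0 := by
  simp_rw [Int.negOnePow_triangular_add_two_mul, Units.val_mul, Units.val_pow_eq_pow_val,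
    Units.val_neg, Units.val_one, ← sum_mul, neg_one_geom_sum, Nat.even_add_one, ite_not, ite_mul,
    zero_mul, one_mul]

theorem Finset.sum_range_succ_ite_even {M : Type*} [AddCommMonoid M] (N : ℕ) (f : ℕ → M) :
    ∑ j ∈ range (N + 1), (if Even j then f j else 0)
      = ∑ k ∈ (range (N + 1)).filter (fun k => 2 * k ≤ N), f (2 * k) := by
  rw [← sum_filter, ← sum_image (g := (2 * ·)) (by intro _ _ _ _ h; simpa using h)]
  congr 1
  ext j
  simp only [mem_filter, mem_range, mem_image]
  constructor
  · rintro ⟨hj, i, rfl⟩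
    exact ⟨i, ⟨by omega, by omega⟩, by ring⟩
  · rintro ⟨i, ⟨-, hi⟩, rfl⟩
    exact ⟨by omega, even_two_mul i⟩

theorem lefschetz_sign_cancellation {M : Type*} [AddCommGroup M] (w : ℤ) (N : ℕ) (a : ℕ → M) :
    ∑ j ∈ Finset.range (N + 1),
        ((-1 : ℤ) ^ j *
          ∑ k ∈ Finset.range (j + 1),
            (Int.negOnePow ((w - j + 2 * k) * (w - j + 2 * k + 1) / 2) : ℤ)) • a j
      = (Int.negOnePow (w * (w + 1) / 2) : ℤ) •
          ∑ k ∈ (Finset.range (N + 1)).filter (fun k => 2 * k ≤ N), ((-1 : ℤ) ^ k) • a (2 * k) := by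
  have coeff (j : ℕ) : (-1 : ℤ) ^ j *
      ∑ k ∈ range (j + 1), (((w - j + 2 * k) * (w - j + 2 * k + 1) / 2).negOnePow : ℤ)
      = if Even j then (-1) ^ (j / 2) * ((w * (w + 1) / 2).negOnePow : ℤ) else 0 := by
    rw [Int.sum_range_succ_negOnePow_triangular_add_two_mul]
    split_ifs with hj
    · obtain ⟨i, rfl⟩ := hj
      rw [← two_mul, Even.neg_one_pow (even_two_mul i), one_mul,
        Nat.mul_div_cancel_left i two_pos, show ((2 * i : ℕ) : ℤ) = 2 * i by push_cast; ring,
        Int.negOnePow_triangular_sub_two_mul, Units.val_mul, Units.val_pow_eq_pow_val,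
        Units.val_neg, Units.val_one]
    · rw [mul_zero]
  simp_rw [coeff, ite_smul, zero_smul, sum_range_succ_ite_even, Nat.mul_div_cancel_left _ two_pos,
    smul_sum, smul_smul, mul_comm]
end

section
/- Let V be a finite-dimensional real vector space with a nondegenerate symmetric bilinear form S' , and suppose V admits subspaces W₁ ⊆ W₀ ⊆ V such that S'(W₀, W₁) = 0, W₁ = W₀^⊥ (the S'-orthogonal complement of W₀), and the form induced by S' on W₀/W₁ is a given nondegenerate symmetric form S. Then the signature of S' equals the signature of S. -/
/-!
Let `σ₊, σ₋` denote the maximal dimensions of positive and negative definite subspaces.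
Nondegeneracy of `S'` gives `dim W₀ + dim W₁ = dim V`, so a positive definite subspace `P ⊆ V`
meets `W₀` in dimension at least `dim P - dim W₁`. Since `S'` restricted to `W₀` factors through
`S` on `W₀ ⧸ W₁`, the quotient map is injective on `P ∩ W₀` with positive definite image; hence
`σ₊(S') ≤ σ₊(S) + dim W₁`, and likewise `σ₋(S') ≤ σ₋(S) + dim W₁`. As
`σ₊(S') + σ₋(S') = dim V = dim (W₀ ⧸ W₁) + 2 dim W₁ ≥ σ₊(S) + σ₋(S) + 2 dim W₁`,
both inequalities are equalities.
-/

/-- The maximal dimension of a subspace on which the bilinear form is positive definite. -/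
noncomputable def posIndex {V : Type*} [AddCommGroup V] [Module ℝ V]
    (B : V →ₗ[ℝ] V →ₗ[ℝ] ℝ) : ℕ :=
  sSup {n : ℕ | ∃ W : Submodule ℝ V, Module.finrank ℝ W = n ∧
    ∀ w ∈ W, w ≠ 0 → 0 < B w w}

/-- The signature of a bilinear form: maximal dimension of a positive-definite subspace
minus maximal dimension of a negative-definite subspace. -/
noncomputable def signature {V : Type*} [AddCommGroup V] [Module ℝ V]
    (B : V →ₗ[ℝ] V →ₗ[ℝ] ℝ) : ℤ :=
  (posIndex B : ℤ) - (posIndex (-B) : ℤ)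

open Module QuadraticMap
open LinearMap (BilinForm BilinMap)

def QuadraticMap.Isometry.neg {R M₁ M₂ N : Type*} [CommRing R] [AddCommGroup M₁]
    [AddCommGroup M₂] [AddCommGroup N] [Module R M₁] [Module R M₂] [Module R N]
    {Q₁ : QuadraticMap R M₁ N} {Q₂ : QuadraticMap R M₂ N} (f : Q₁ →qᵢ Q₂) : -Q₁ →qᵢ -Q₂ where
  toLinearMap := f.toLinearMap
  map_app' m := by simp [f.map_app]

section SigPos

variable {𝕜 M M' : Type*} [Field 𝕜] [LinearOrder 𝕜]
  [AddCommGroup M] [Module 𝕜 M] [FiniteDimensional 𝕜 M]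
  [AddCommGroup M'] [Module 𝕜 M'] [FiniteDimensional 𝕜 M']
  {Q : QuadraticForm 𝕜 M} {Q' : QuadraticForm 𝕜 M'}

theorem QuadraticMap.Isometry.sigPos_le (f : Q →qᵢ Q') : sigPos Q ≤ sigPos Q' := by
  obtain ⟨P, hPrank, hP⟩ := exists_finrank_eq_sigPos_and_posDef Q
  have hinj : Function.Injective (f.toLinearMap.domRestrict P) := by
    rw [← LinearMap.ker_eq_bot, Submodule.eq_bot_iff]
    intro x hx
    by_contra hx0
    have hQx := hP x hx0
    rw [restrict_apply, ← f.map_app, show f x = 0 from hx, map_zero] at hQx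
    exact hQx.false
  have hpos : (Q'.restrict (P.map f.toLinearMap)).PosDef := by
    rintro ⟨_, x, hxP, rfl⟩ hx0
    change 0 < Q' (f x)
    rw [f.map_app]
    exact hP ⟨x, hxP⟩ fun h ↦ hx0 (by simp [show x = 0 from congrArg Subtype.val h])
  calc sigPos Q = finrank 𝕜 (P.map f.toLinearMap) := by
        rw [← hPrank, ← LinearMap.range_domRestrict, LinearMap.finrank_range_of_inj hinj]
    _ ≤ sigPos Q' := le_sigPos_of_posDef Q' hpos

theorem sigPos_add_finrank_le_sigPos_restrict_add (W : Submodule 𝕜 M) :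
    sigPos Q + finrank 𝕜 W ≤ sigPos (Q.restrict W) + finrank 𝕜 M := by
  obtain ⟨P, hPrank, hP⟩ := exists_finrank_eq_sigPos_and_posDef Q
  have hpos : ((Q.restrict W).restrict (P.comap W.subtype)).PosDef := by
    rintro ⟨x, hxP⟩ hx0
    exact hP ⟨x, hxP⟩ fun h ↦ hx0 (by ext; simpa using congrArg Subtype.val h)
  have hinf : finrank 𝕜 (P.comap W.subtype) = finrank 𝕜 (W ⊓ P : Submodule 𝕜 M) := by
    rw [← Submodule.map_comap_subtype, Submodule.finrank_map_subtype_eq]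
  have := le_sigPos_of_posDef _ hpos
  have := Submodule.finrank_sup_add_finrank_inf_eq W P
  have := (W ⊔ P).finrank_le
  omega

theorem QuadraticMap.Isometry.sigPos_add_finrank_le {W : Submodule 𝕜 M}
    (f : Q.restrict W →qᵢ Q') : sigPos Q + finrank 𝕜 W ≤ sigPos Q' + finrank 𝕜 M :=
  (sigPos_add_finrank_le_sigPos_restrict_add W).trans (Nat.add_le_add_right f.sigPos_le _)

theorem LinearMap.BilinForm.sigPos_add_sigNeg_toQuadraticMap [IsStrictOrderedRing 𝕜]
    (B : BilinForm 𝕜 M) (hB : B.IsSymm) (hker : LinearMap.ker B = ⊥) :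
    sigPos B.toQuadraticMap + sigNeg B.toQuadraticMap = finrank 𝕜 M := by
  have : Invertible (2 : 𝕜) := invertibleOfNonzero two_ne_zero
  have hrad : B.toQuadraticMap.radical = ⊥ := by
    rw [radical_eq_ker_polarBilin, BilinMap.polarBilin_toQuadraticMap, eq_bot_iff]
    intro m hm
    have hBm : B m = 0 := LinearMap.ext fun n ↦ by
      have := LinearMap.congr_fun hm n
      simp only [LinearMap.add_apply, LinearMap.flip_apply, hB.eq n m] at this
      simpa using this
    rw [← hker]
    exact hBm
  have := QuadraticForm.sigPos_add_sigNeg_add_radical (Q := B.toQuadraticMap)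
  rwa [hrad, finrank_bot, add_zero] at this

end SigPos

theorem LinearMap.BilinForm.posDef_restrict_toQuadraticMap_iff {R M : Type*} [CommRing R]
    [PartialOrder R] [AddCommGroup M] [Module R M] (B : BilinForm R M)
    (W : Submodule R M) :
    (B.toQuadraticMap.restrict W).PosDef ↔ ∀ w ∈ W, w ≠ 0 → 0 < B w w :=
  ⟨fun h w hw hw0 ↦ h ⟨w, hw⟩ fun h0 ↦ hw0 (congrArg Subtype.val h0),
    fun h w hw0 ↦ h w w.2 fun h0 ↦ hw0 (Subtype.ext h0)⟩

theorem posIndex_eq_sigPos {V : Type*} [AddCommGroup V] [Module ℝ V] [FiniteDimensional ℝ V]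
    (B : BilinForm ℝ V) : posIndex B = sigPos B.toQuadraticMap := by
  simp_rw [posIndex, ← (sigPos_isGreatest _).csSup_eq,
    BilinForm.posDef_restrict_toQuadraticMap_iff]

theorem signature_eq_sigPos_sub_sigNeg {V : Type*} [AddCommGroup V] [Module ℝ V]
    [FiniteDimensional ℝ V] (B : BilinForm ℝ V) :
    signature B = sigPos B.toQuadraticMap - sigNeg B.toQuadraticMap := by
  rw [signature, posIndex_eq_sigPos, posIndex_eq_sigPos, BilinMap.toQuadraticMap_neg,
    sigPos_neg]

theorem signature_of_sublagrangian_reduction_general {V : Type*} [AddCommGroup V] [Module ℝ V]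
    [FiniteDimensional ℝ V]
    (S' : V →ₗ[ℝ] V →ₗ[ℝ] ℝ)
    (hS'symm : ∀ u v, S' u v = S' v u)
    (hS'nd : ∀ v, (∀ w, S' v w = 0) → v = 0)
    (W₀ W₁ : Submodule ℝ V) (hWle : W₁ ≤ W₀)
    (hperp : ∀ v : V, v ∈ W₁ ↔ ∀ w ∈ W₀, S' v w = 0)
    (S : (W₀ ⧸ W₁.comap W₀.subtype) →ₗ[ℝ] (W₀ ⧸ W₁.comap W₀.subtype) →ₗ[ℝ] ℝ)
    (hinduced : ∀ u v : W₀,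
      S ((W₁.comap W₀.subtype).mkQ u) ((W₁.comap W₀.subtype).mkQ v) = S' u v) :
    signature S' = signature S := by
  have hker : LinearMap.ker S' = ⊥ :=
    LinearMap.ker_eq_bot'.2 fun v hv ↦ hS'nd v fun w ↦ by simp [hv]
  have hW₁ : W₁ = BilinForm.orthogonal S' W₀ := by
    ext v
    simp [BilinForm.mem_orthogonal_iff, hperp, hS'symm]
  have hdim : finrank ℝ W₀ + finrank ℝ W₁ = finrank ℝ V := by
    have := BilinForm.finrank_add_finrank_orthogonal' (B := S') W₀
    rwa [hker, inf_bot_eq, finrank_bot, add_zero, ← hW₁] at this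
  have hquot : finrank ℝ (W₀ ⧸ W₁.comap W₀.subtype) + finrank ℝ W₁ = finrank ℝ W₀ := by
    rw [← (Submodule.comapSubtypeEquivOfLe hWle).finrank_eq]
    exact Submodule.finrank_quotient_add_finrank _
  let f : (BilinMap.toQuadraticMap S').restrict W₀ →qᵢ BilinMap.toQuadraticMap S :=
    { (W₁.comap W₀.subtype).mkQ with map_app' u := hinduced u u }
  have hpos := f.sigPos_add_finrank_le
  have hneg := Isometry.sigPos_add_finrank_le (Q := -BilinMap.toQuadraticMap S') f.neg
  rw [sigPos_neg, sigPos_neg] at hneg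
  have hsumS' := BilinForm.sigPos_add_sigNeg_toQuadraticMap S' ⟨hS'symm⟩ hker
  have hsumS := QuadraticForm.sigPos_add_sigNeg_add_radical (Q := BilinMap.toQuadraticMap S)
  rw [signature_eq_sigPos_sub_sigNeg, signature_eq_sigPos_sub_sigNeg]
  omega

theorem signature_of_sublagrangian_reduction {V : Type*} [AddCommGroup V] [Module ℝ V]
    [FiniteDimensional ℝ V]
    (S' : V →ₗ[ℝ] V →ₗ[ℝ] ℝ)
    (hS'symm : ∀ u v, S' u v = S' v u)
    (hS'nd : ∀ v, (∀ w, S' v w = 0) → v = 0)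
    (W₀ W₁ : Submodule ℝ V) (hWle : W₁ ≤ W₀)
    (horth : ∀ u ∈ W₀, ∀ v ∈ W₁, S' u v = 0)
    (hperp : ∀ v : V, v ∈ W₁ ↔ ∀ w ∈ W₀, S' v w = 0)
    (S : (W₀ ⧸ W₁.comap W₀.subtype) →ₗ[ℝ] (W₀ ⧸ W₁.comap W₀.subtype) →ₗ[ℝ] ℝ)
    (hSsymm : ∀ u v, S u v = S v u)
    (hSnd : ∀ v, (∀ w, S v w = 0) → v = 0)
    (hinduced : ∀ u v : W₀,
      S ((W₁.comap W₀.subtype).mkQ u) ((W₁.comap W₀.subtype).mkQ v) = S' u v) :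
    signature S' = signature S :=
  signature_of_sublagrangian_reduction_general S' hS'symm hS'nd W₀ W₁ hWle hperp S hinduced
end
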